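/- The function d(S, D) = 1 - J(S, D), where J is the Jaccard index, is symmetric and satisfies the triangle inequality on measurable sets of finite positive measure (modulo null sets), i.e., it is a pseudo-metric. -/

import Mathlib

open MeasureTheory
set_option maxHeartbeats 1000000

private lemma jaccard_key (a b c p q r s : ℝ)
    (ha : 0 ≤ a) (hb : 0 ≤ b) (hc : 0 ≤ c) (hp : 0 ≤ p) (hq : 0 ≤ q)
    (hr : 0 ≤ r) (hs : 0 ≤ s)
    (hU1 : 0 < a + c + p + q + r + s) (hU2 : 0 < a + b + p + q + r + s)
    (hU3 : 0 < b + c + p + q + r + s) :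
    (p + s) / (a + b + p + q + r + s) + (r + s) / (b + c + p + q + r + s)
      ≤ 1 + (q + s) / (a + c + p + q + r + s) := by
  have hU1d := hU1; have hU2d := hU2; have hU3d := hU3
  have hE : (0:ℝ) ≤ 2 * (q * s * s) + 4 * (q * r * s) + 2 * (q * r * r) + 4 * (q * q * s) + 4 * (q * q * r) + 2 * (q * q * q) + 4 * (p * q * s) + 4 * (p * q * r) + 4 * (p * q * q) + 2 * (p * p * q) + c * r * s + c * r * r + 3 * (c * q * s) + 4 * (c * q * r) + 3 * (c * q * q) + c * p * r + 3 * (c * p * q) + c * c * r + c * c * q + 2 * (b * s * s) + 3 * (b * r * s) + b * r * r + 6 * (b * q * s) + 5 * (b * q * r) + 4 * (b * q * q) + 3 * (b * p * s) + 2 * (b * p * r) + 5 * (b * p * q) + b * p * p + 2 * (b * c * s) + 2 * (b * c * r) + 4 * (b * c * q) + 2 * (b * c * p) + b * c * c + 2 * (b * b * s) + b * b * r + 2 * (b * b * q) + b * b * p + b * b * c + 3 * (a * q * s) + 3 * (a * q * r) + 3 * (a * q * q) + a * p * s + a * p * r + 4 * (a * p * q) + a * p * p + 2 * (a * c * s)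 + 2 * (a * c * r) + 4 * (a * c * q) + 2 * (a * c * p) + a * c * c + 2 * (a * b * s) + 2 * (a * b * r) + 4 * (a * b * q) + 2 * (a * b * p) + 2 * (a * b * c) + a * b * b + a * a * q + a * a * p + a * a * c + a * a * b :=
    (add_nonneg (add_nonneg (add_nonneg (add_nonneg (add_nonneg (add_nonneg (add_nonneg (add_nonneg (add_nonneg (add_nonneg (add_nonneg (add_nonneg (add_nonneg (add_nonneg (add_nonneg (add_nonneg (add_nonneg (add_nonneg (add_nonneg (add_nonneg (add_nonneg (add_nonneg (add_nonneg (add_nonneg (add_nonneg (add_nonneg (add_nonneg (add_nonneg (add_nonneg (add_nonneg (add_nonneg (add_nonneg (add_nonneg (add_nonneg (add_nonneg (add_nonneg (add_nonneg (add_nonneg (add_nonneg (add_nonneg (add_nonneg (add_nonneg (add_nonneg (add_nonneg (add_nonneg (add_nonneg (add_nonneg (add_nonneg (add_nonneg (add_nonneg (add_nonneg (add_nonneg (add_nonneg (add_nonneg (add_nonneg (add_nonneg (add_nonneg (add_nonneg (add_nonneg (add_nonneg (mul_nonneg (by norm_num : (0:ℝ) ≤ 2) (mul_nonneg (mul_nonneg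 hq hs) hs)) (mul_nonneg (by norm_num : (0:ℝ) ≤ 4) (mul_nonneg (mul_nonneg hq hr) hs))) (mul_nonneg (by norm_num : (0:ℝ) ≤ 2) (mul_nonneg (mul_nonneg hq hr) hr))) (mul_nonneg (by norm_num : (0:ℝ) ≤ 4) (mul_nonneg (mul_nonneg hq hq) hs))) (mul_nonneg (by norm_num : (0:ℝ) ≤ 4) (mul_nonneg (mul_nonneg hq hq) hr))) (mul_nonneg (by norm_num : (0:ℝ) ≤ 2) (mul_nonneg (mul_nonneg hq hq) hq))) (mul_nonneg (by norm_num : (0:ℝ) ≤ 4) (mul_nonneg (mul_nonneg hp hq) hs))) (mul_nonneg (by norm_num : (0:ℝ) ≤ 4) (mul_nonneg (mul_nonneg hp hq) hr))) (mul_nonneg (by norm_num : (0:ℝ) ≤ 4) (mul_nonneg (mul_nonneg hp hq) hq))) (mul_nonneg (by norm_num : (0:ℝ) ≤ 2) (mul_nonneg (mul_nonneg hp hp) hq))) (mul_nonneg (mul_nonneg hc hr) hs)) (mul_nonneg (mul_nonneg hc hr) hr)) (mul_nonneg (by norm_num : (0:ℝ) ≤ 3) (mul_nonneg (mul_nonneg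 hc hq) hs))) (mul_nonneg (by norm_num : (0:ℝ) ≤ 4) (mul_nonneg (mul_nonneg hc hq) hr))) (mul_nonneg (by norm_num : (0:ℝ) ≤ 3) (mul_nonneg (mul_nonneg hc hq) hq))) (mul_nonneg (mul_nonneg hc hp) hr)) (mul_nonneg (by norm_num : (0:ℝ) ≤ 3) (mul_nonneg (mul_nonneg hc hp) hq))) (mul_nonneg (mul_nonneg hc hc) hr)) (mul_nonneg (mul_nonneg hc hc) hq)) (mul_nonneg (by norm_num : (0:ℝ) ≤ 2) (mul_nonneg (mul_nonneg hb hs) hs))) (mul_nonneg (by norm_num : (0:ℝ) ≤ 3) (mul_nonneg (mul_nonneg hb hr) hs))) (mul_nonneg (mul_nonneg hb hr) hr)) (mul_nonneg (by norm_num : (0:ℝ) ≤ 6) (mul_nonneg (mul_nonneg hb hq) hs))) (mul_nonneg (by norm_num : (0:ℝ) ≤ 5) (mul_nonneg (mul_nonneg hb hq) hr))) (mul_nonneg (by norm_num : (0:ℝ) ≤ 4) (mul_nonneg (mul_nonneg hb hq) hq))) (mul_nonneg (by norm_num : (0:ℝ) ≤ 3) (mul_nonneg (mul_nonneg hb hp)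 hs))) (mul_nonneg (by norm_num : (0:ℝ) ≤ 2) (mul_nonneg (mul_nonneg hb hp) hr))) (mul_nonneg (by norm_num : (0:ℝ) ≤ 5) (mul_nonneg (mul_nonneg hb hp) hq))) (mul_nonneg (mul_nonneg hb hp) hp)) (mul_nonneg (by norm_num : (0:ℝ) ≤ 2) (mul_nonneg (mul_nonneg hb hc) hs))) (mul_nonneg (by norm_num : (0:ℝ) ≤ 2) (mul_nonneg (mul_nonneg hb hc) hr))) (mul_nonneg (by norm_num : (0:ℝ) ≤ 4) (mul_nonneg (mul_nonneg hb hc) hq))) (mul_nonneg (by norm_num : (0:ℝ) ≤ 2) (mul_nonneg (mul_nonneg hb hc) hp))) (mul_nonneg (mul_nonneg hb hc) hc)) (mul_nonneg (by norm_num : (0:ℝ) ≤ 2) (mul_nonneg (mul_nonneg hb hb) hs))) (mul_nonneg (mul_nonneg hb hb) hr)) (mul_nonneg (by norm_num : (0:ℝ) ≤ 2) (mul_nonneg (mul_nonneg hb hb) hq))) (mul_nonneg (mul_nonneg hb hb) hp)) (mul_nonneg (mul_nonneg hb hb) hc)) (mul_nonneg (by norm_num : (0:ℝ) ≤ 3)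 (mul_nonneg (mul_nonneg ha hq) hs))) (mul_nonneg (by norm_num : (0:ℝ) ≤ 3) (mul_nonneg (mul_nonneg ha hq) hr))) (mul_nonneg (by norm_num : (0:ℝ) ≤ 3) (mul_nonneg (mul_nonneg ha hq) hq))) (mul_nonneg (mul_nonneg ha hp) hs)) (mul_nonneg (mul_nonneg ha hp) hr)) (mul_nonneg (by norm_num : (0:ℝ) ≤ 4) (mul_nonneg (mul_nonneg ha hp) hq))) (mul_nonneg (mul_nonneg ha hp) hp)) (mul_nonneg (by norm_num : (0:ℝ) ≤ 2) (mul_nonneg (mul_nonneg ha hc) hs))) (mul_nonneg (by norm_num : (0:ℝ) ≤ 2) (mul_nonneg (mul_nonneg ha hc) hr))) (mul_nonneg (by norm_num : (0:ℝ) ≤ 4) (mul_nonneg (mul_nonneg ha hc) hq))) (mul_nonneg (by norm_num : (0:ℝ) ≤ 2) (mul_nonneg (mul_nonneg ha hc) hp))) (mul_nonneg (mul_nonneg ha hc) hc)) (mul_nonneg (by norm_num : (0:ℝ) ≤ 2) (mul_nonneg (mul_nonneg ha hb) hs))) (mul_nonneg (by norm_num : (0:ℝ) ≤ 2) (mul_nonneg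 (mul_nonneg ha hb) hr))) (mul_nonneg (by norm_num : (0:ℝ) ≤ 4) (mul_nonneg (mul_nonneg ha hb) hq))) (mul_nonneg (by norm_num : (0:ℝ) ≤ 2) (mul_nonneg (mul_nonneg ha hb) hp))) (mul_nonneg (by norm_num : (0:ℝ) ≤ 2) (mul_nonneg (mul_nonneg ha hb) hc))) (mul_nonneg (mul_nonneg ha hb) hb)) (mul_nonneg (mul_nonneg ha ha) hq)) (mul_nonneg (mul_nonneg ha ha) hp)) (mul_nonneg (mul_nonneg ha ha) hc)) (mul_nonneg (mul_nonneg ha ha) hb))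
  have hpoly : (p + s) * (a + c + p + q + r + s) * (b + c + p + q + r + s) + (r + s) * (a + c + p + q + r + s) * (a + b + p + q + r + s) ≤ (a + c + p + q + r + s) * (a + b + p + q + r + s) * (b + c + p + q + r + s) + (q + s) * (a + b + p + q + r + s) * (b + c + p + q + r + s) := by
    linarith [hE]
  have h1 : (p + s) / (a + b + p + q + r + s) + (r + s) / (b + c + p + q + r + s)
      = ((p + s) * (a + c + p + q + r + s) * (b + c + p + q + r + s) + (r + s) * (a + c + p + q + r + s) * (a + b + p + q + r + s)) / ((a + c + p + q + r + s) * (a + b + p + q + r + s) * (b + c + p + q + r + s)) := by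
    field_simp
  have h2 : 1 + (q + s) / (a + c + p + q + r + s)
      = ((a + c + p + q + r + s) * (a + b + p + q + r + s) * (b + c + p + q + r + s) + (q + s) * (a + b + p + q + r + s) * (b + c + p + q + r + s)) / ((a + c + p + q + r + s) * (a + b + p + q + r + s) * (b + c + p + q + r + s)) := by
    field_simp
  rw [h1, h2]
  exact div_le_div_of_nonneg_right hpoly (by positivity)

private lemma toReal_split {X : Type*} [MeasurableSpace X] (μ : Measure X)
    {A B : Set X} (hB : MeasurableSet B) (hA : μ A ≠ ⊤) :
    (μ A).toReal = (μ (A ∩ B)).toReal + (μ (A \ B)).toReal := by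
  have h1 : μ (A ∩ B) ≠ ⊤ :=
    ((measure_mono Set.inter_subset_left).trans_lt hA.lt_top).ne
  have h2 : μ (A \ B) ≠ ⊤ :=
    ((measure_mono Set.diff_subset).trans_lt hA.lt_top).ne
  rw [← ENNReal.toReal_add h1 h2, measure_inter_add_diff A hB]

theorem jaccard_distance_pseudometric
    {X : Type*} [MeasurableSpace X] (μ : Measure X)
    (J : Set X → Set X → ℝ)
    (hJ : ∀ A B : Set X, J A B = if μ (A ∪ B) = 0 then 1
      else (μ (A ∩ B)).toReal / (μ (A ∪ B)).toReal)
    (d : Set X → Set X → ℝ) (hd : ∀ A B, d A B = 1 - J A B)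
    (S D T : Set X)
    (hS : MeasurableSet S) (hD : MeasurableSet D) (hT : MeasurableSet T)
    (hSfin : μ S < ⊤) (hDfin : μ D < ⊤) (hTfin : μ T < ⊤) :
    d S D = d D S ∧ d S T ≤ d S D + d D T := by
  have hsymm : d S D = d D S := by
    rw [hd, hd, hJ, hJ, Set.union_comm, Set.inter_comm]
  refine ⟨hsymm, ?_⟩
  have hne : ∀ {A B : Set X}, A ⊆ B → μ B ≠ ⊤ → μ A ≠ ⊤ :=
    fun hsub hB => ((measure_mono hsub).trans_lt hB.lt_top).ne
  have hSne : μ S ≠ ⊤ := hSfin.ne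
  have hDne : μ D ≠ ⊤ := hDfin.ne
  have hTne : μ T ≠ ⊤ := hTfin.ne
  have hJle : ∀ A B : Set X, μ A ≠ ⊤ → μ B ≠ ⊤ → J A B ≤ 1 := by
    intro A B hA hB
    rw [hJ]
    split_ifs with h
    · exact le_refl 1
    · exact div_le_one_of_le₀
        (ENNReal.toReal_mono (measure_union_lt_top hA.lt_top hB.lt_top).ne
          (measure_mono (Set.inter_subset_left.trans Set.subset_union_left)))
        ENNReal.toReal_nonneg
  by_cases h1 : μ (S ∪ D) = 0
  · have hS0 : μ S = 0 := measure_mono_null Set.subset_union_left h1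
    have hD0 : μ D = 0 := measure_mono_null Set.subset_union_right h1
    have hSTu : μ (S ∪ T) = μ T :=
      le_antisymm ((measure_union_le _ _).trans (by simp [hS0]))
        (measure_mono Set.subset_union_right)
    have hDTu : μ (D ∪ T) = μ T :=
      le_antisymm ((measure_union_le _ _).trans (by simp [hD0]))
        (measure_mono Set.subset_union_right)
    have hST0 : μ (S ∩ T) = 0 := measure_mono_null Set.inter_subset_left hS0
    have hDT0 : μ (D ∩ T) = 0 := measure_mono_null Set.inter_subset_left hD0
    have hEq : J S T = J D T := by rw [hJ, hJ, hSTu, hDTu, hST0, hDT0]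
    have hJSD : J S D = 1 := by rw [hJ, if_pos h1]
    rw [hd, hd, hd, hEq, hJSD]
    linarith
  by_cases h2 : μ (D ∪ T) = 0
  · have hD0 : μ D = 0 := measure_mono_null Set.subset_union_left h2
    have hT0 : μ T = 0 := measure_mono_null Set.subset_union_right h2
    have hSDu : μ (S ∪ D) = μ S :=
      le_antisymm ((measure_union_le _ _).trans (by simp [hD0]))
        (measure_mono Set.subset_union_left)
    have hSTu : μ (S ∪ T) = μ S :=
      le_antisymm ((measure_union_le _ _).trans (by simp [hT0]))
        (measure_mono Set.subset_union_left)
    have hSD0 : μ (S ∩ D) = 0 := measure_mono_null Set.inter_subset_right hD0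
    have hST0 : μ (S ∩ T) = 0 := measure_mono_null Set.inter_subset_right hT0
    have hEq : J S T = J S D := by rw [hJ, hJ, hSTu, hSDu, hST0, hSD0]
    have hJDT : J D T = 1 := by rw [hJ, if_pos h2]
    rw [hd, hd, hd, hEq, hJDT]
    linarith
  by_cases h3 : μ (S ∪ T) = 0
  · have hJST : J S T = 1 := by rw [hJ, if_pos h3]
    have h4 := hJle S D hSne hDne
    have h5 := hJle D T hDne hTne
    rw [hd, hd, hd, hJST]
    linarith
  -- main case
  have finSUD : μ (S ∪ D) ≠ ⊤ := (measure_union_lt_top hSfin hDfin).ne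
  have finSUT : μ (S ∪ T) ≠ ⊤ := (measure_union_lt_top hSfin hTfin).ne
  have finDUT : μ (D ∪ T) ≠ ⊤ := (measure_union_lt_top hDfin hTfin).ne
  have eS : (μ S).toReal = (μ (S ∩ D)).toReal + (μ (S \ D)).toReal := toReal_split μ hD hSne
  have eSD : (μ (S ∩ D)).toReal = (μ (S ∩ D ∩ T)).toReal + (μ ((S ∩ D) \ T)).toReal :=
    toReal_split μ hT (hne Set.inter_subset_left hSne)
  have eSdD : (μ (S \ D)).toReal = (μ ((S ∩ T) \ D)).toReal + (μ (S \ (D ∪ T))).toReal := by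
    rw [show (S ∩ T) \ D = (S \ D) ∩ T from by ext x; simp only [Set.mem_inter_iff, Set.mem_diff, Set.mem_union]; tauto,
        show S \ (D ∪ T) = (S \ D) \ T from by ext x; simp only [Set.mem_inter_iff, Set.mem_diff, Set.mem_union]; tauto]
    exact toReal_split μ hT (hne Set.diff_subset hSne)
  have eSUT : (μ (S ∪ T)).toReal = (μ S).toReal + (μ (T \ S)).toReal := by
    have h := toReal_split μ hS finSUT
    rw [show (S ∪ T) ∩ S = S from by ext x; simp only [Set.mem_inter_iff, Set.mem_union]; tauto,
        show (S ∪ T) \ S = T \ S from by ext x; simp only [Set.mem_diff, Set.mem_union]; tauto] at h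
    exact h
  have eTdS : (μ (T \ S)).toReal = (μ ((D ∩ T) \ S)).toReal + (μ (T \ (S ∪ D))).toReal := by
    rw [show (D ∩ T) \ S = (T \ S) ∩ D from by ext x; simp only [Set.mem_inter_iff, Set.mem_diff, Set.mem_union]; tauto,
        show T \ (S ∪ D) = (T \ S) \ D from by ext x; simp only [Set.mem_inter_iff, Set.mem_diff, Set.mem_union]; tauto]
    exact toReal_split μ hD (hne Set.diff_subset hTne)
  have eSUD : (μ (S ∪ D)).toReal = (μ S).toReal + (μ (D \ S)).toReal := by
    have h := toReal_split μ hS finSUD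
    rw [show (S ∪ D) ∩ S = S from by ext x; simp only [Set.mem_inter_iff, Set.mem_union]; tauto,
        show (S ∪ D) \ S = D \ S from by ext x; simp only [Set.mem_diff, Set.mem_union]; tauto] at h
    exact h
  have eDdS : (μ (D \ S)).toReal = (μ ((D ∩ T) \ S)).toReal + (μ (D \ (S ∪ T))).toReal := by
    rw [show (D ∩ T) \ S = (D \ S) ∩ T from by ext x; simp only [Set.mem_inter_iff, Set.mem_diff, Set.mem_union]; tauto,
        show D \ (S ∪ T) = (D \ S) \ T from by ext x; simp only [Set.mem_inter_iff, Set.mem_diff, Set.mem_union]; tauto]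
    exact toReal_split μ hT (hne Set.diff_subset hDne)
  have eDUT : (μ (D ∪ T)).toReal = (μ D).toReal + (μ (T \ D)).toReal := by
    have h := toReal_split μ hD finDUT
    rw [show (D ∪ T) ∩ D = D from by ext x; simp only [Set.mem_inter_iff, Set.mem_union]; tauto,
        show (D ∪ T) \ D = T \ D from by ext x; simp only [Set.mem_diff, Set.mem_union]; tauto] at h
    exact h
  have eD : (μ D).toReal = (μ (D ∩ T)).toReal + (μ (D \ T)).toReal := toReal_split μ hT hDne
  have eDT : (μ (D ∩ T)).toReal = (μ (S ∩ D ∩ T)).toReal + (μ ((D ∩ T) \ S)).toReal := by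
    rw [show S ∩ D ∩ T = (D ∩ T) ∩ S from by ext x; simp only [Set.mem_inter_iff, Set.mem_diff, Set.mem_union]; tauto]
    exact toReal_split μ hS (hne Set.inter_subset_left hDne)
  have eDdT : (μ (D \ T)).toReal = (μ ((S ∩ D) \ T)).toReal + (μ (D \ (S ∪ T))).toReal := by
    rw [show (S ∩ D) \ T = (D \ T) ∩ S from by ext x; simp only [Set.mem_inter_iff, Set.mem_diff, Set.mem_union]; tauto,
        show D \ (S ∪ T) = (D \ T) \ S from by ext x; simp only [Set.mem_inter_iff, Set.mem_diff, Set.mem_union]; tauto]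
    exact toReal_split μ hS (hne Set.diff_subset hDne)
  have eTdD : (μ (T \ D)).toReal = (μ ((S ∩ T) \ D)).toReal + (μ (T \ (S ∪ D))).toReal := by
    rw [show (S ∩ T) \ D = (T \ D) ∩ S from by ext x; simp only [Set.mem_inter_iff, Set.mem_diff, Set.mem_union]; tauto,
        show T \ (S ∪ D) = (T \ D) \ S from by ext x; simp only [Set.mem_inter_iff, Set.mem_diff, Set.mem_union]; tauto]
    exact toReal_split μ hS (hne Set.diff_subset hTne)
  have eST : (μ (S ∩ T)).toReal = (μ (S ∩ D ∩ T)).toReal + (μ ((S ∩ T) \ D)).toReal := by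
    rw [show S ∩ D ∩ T = (S ∩ T) ∩ D from by ext x; simp only [Set.mem_inter_iff, Set.mem_diff, Set.mem_union]; tauto]
    exact toReal_split μ hD (hne Set.inter_subset_left hSne)
  have hU1 : (μ (S ∪ T)).toReal = (μ (S \ (D ∪ T))).toReal + (μ (T \ (S ∪ D))).toReal + (μ ((S ∩ D) \ T)).toReal + (μ ((S ∩ T) \ D)).toReal + (μ ((D ∩ T) \ S)).toReal + (μ (S ∩ D ∩ T)).toReal := by
    linarith
  have hU2 : (μ (S ∪ D)).toReal = (μ (S \ (D ∪ T))).toReal + (μ (D \ (S ∪ T))).toReal + (μ ((S ∩ D) \ T)).toReal + (μ ((S ∩ T) \ D)).toReal + (μ ((D ∩ T) \ S)).toReal + (μ (S ∩ D ∩ T)).toReal := by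
    linarith
  have hU3 : (μ (D ∪ T)).toReal = (μ (D \ (S ∪ T))).toReal + (μ (T \ (S ∪ D))).toReal + (μ ((S ∩ D) \ T)).toReal + (μ ((S ∩ T) \ D)).toReal + (μ ((D ∩ T) \ S)).toReal + (μ (S ∩ D ∩ T)).toReal := by
    linarith
  have hNST : (μ (S ∩ T)).toReal = (μ ((S ∩ T) \ D)).toReal + (μ (S ∩ D ∩ T)).toReal := by linarith
  have hNSD : (μ (S ∩ D)).toReal = (μ ((S ∩ D) \ T)).toReal + (μ (S ∩ D ∩ T)).toReal := by linarith
  have hNDT : (μ (D ∩ T)).toReal = (μ ((D ∩ T) \ S)).toReal + (μ (S ∩ D ∩ T)).toReal := by linarith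
  have hU1pos : 0 < (μ (S ∪ T)).toReal := ENNReal.toReal_pos h3 finSUT
  have hU2pos : 0 < (μ (S ∪ D)).toReal := ENNReal.toReal_pos h1 finSUD
  have hU3pos : 0 < (μ (D ∪ T)).toReal := ENNReal.toReal_pos h2 finDUT
  have key := jaccard_key (μ (S \ (D ∪ T))).toReal (μ (D \ (S ∪ T))).toReal (μ (T \ (S ∪ D))).toReal (μ ((S ∩ D) \ T)).toReal (μ ((S ∩ T) \ D)).toReal (μ ((D ∩ T) \ S)).toReal (μ (S ∩ D ∩ T)).toReal
    ENNReal.toReal_nonneg ENNReal.toReal_nonneg ENNReal.toReal_nonneg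
    ENNReal.toReal_nonneg ENNReal.toReal_nonneg ENNReal.toReal_nonneg
    ENNReal.toReal_nonneg (by rw [← hU1]; exact hU1pos) (by rw [← hU2]; exact hU2pos) (by rw [← hU3]; exact hU3pos)
  have hJST : J S T = ((μ ((S ∩ T) \ D)).toReal + (μ (S ∩ D ∩ T)).toReal) / ((μ (S \ (D ∪ T))).toReal + (μ (T \ (S ∪ D))).toReal + (μ ((S ∩ D) \ T)).toReal + (μ ((S ∩ T) \ D)).toReal + (μ ((D ∩ T) \ S)).toReal + (μ (S ∩ D ∩ T)).toReal) := by
    rw [hJ, if_neg h3, hNST, hU1]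
  have hJSD : J S D = ((μ ((S ∩ D) \ T)).toReal + (μ (S ∩ D ∩ T)).toReal) / ((μ (S \ (D ∪ T))).toReal + (μ (D \ (S ∪ T))).toReal + (μ ((S ∩ D) \ T)).toReal + (μ ((S ∩ T) \ D)).toReal + (μ ((D ∩ T) \ S)).toReal + (μ (S ∩ D ∩ T)).toReal) := by
    rw [hJ, if_neg h1, hNSD, hU2]
  have hJDT : J D T = ((μ ((D ∩ T) \ S)).toReal + (μ (S ∩ D ∩ T)).toReal) / ((μ (D \ (S ∪ T))).toReal + (μ (T \ (S ∪ D))).toReal + (μ ((S ∩ D) \ T)).toReal + (μ ((S ∩ T) \ D)).toReal + (μ ((D ∩ T) \ S)).toReal + (μ (S ∩ D ∩ T)).toReal) := by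
    rw [hJ, if_neg h2, hNDT, hU3]
  rw [hd, hd, hd, hJST, hJSD, hJDT]
  linarith [key]
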